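/- Let n ∈ ℕ, κ ∈ ℝ, and define U_vol : Matrix (Fin n) (Fin n) ℝ → ℝ by U_vol(A) = (κ/2)·[ (det A − 1)/2 − (1/2)·log(det A) ], and the dilative energy U⁺_mat(A) = U_vol(A) if det A ≥ 1 and U⁺_mat(A) = 0 otherwise. Then at every matrix C with det C > 0 — including matrices with det C = 1 — U⁺_mat is Fréchet differentiable with derivative H ↦ (κ/4)·max(det C − 1, 0)·trace(C⁻¹·H). Equivalently, the dilative stress satisfies S⁺(C) = 2·∂U⁺/∂C = H(det C − 1)·S_∘(C), where H is the Heaviside function and S_∘(C) = (κ/2)·(det C − 1)·C⁻¹. -/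

import Mathlib

open Matrix

attribute [local instance] Matrix.normedAddCommGroup Matrix.normedSpace

/-!
`U⁺ = φ ∘ det` with `φ y = H(y - 1) U_vol(y)`. The determinant is a continuous multilinear
function of the rows, so its derivative is the sum of the row-by-row variations, which Cramer's
rule turns into Jacobi's formula `H ↦ tr(adj C · H) = det C · tr(C⁻¹ H)`. The cut-off `φ` is
differentiable at `1` because `U_vol` has a double zero there: `U_vol(1) = U_vol'(1) = 0`.
-/

namespace Matrix

variable {𝕜 n : Type*} [Fintype n] [DecidableEq n]

theorem det_updateRow_eq_sum_mul_adjugate [CommRing 𝕜] (C : Matrix n n 𝕜) (j : n) (v : n → 𝕜) :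
    (C.updateRow j v).det = ∑ i, v i * C.adjugate i j := by
  rw [← cramer_transpose_apply, cramer_eq_adjugate_mulVec, ← adjugate_transpose, mulVec,
    dotProduct]
  simp only [transpose_apply, mul_comm]

theorem sum_det_updateRow_eq_trace_adjugate_mul [CommRing 𝕜] (C H : Matrix n n 𝕜) :
    ∑ j, (C.updateRow j (H j)).det = trace (C.adjugate * H) := by
  simp only [det_updateRow_eq_sum_mul_adjugate, trace, diag, mul_apply, mul_comm]
  exact Finset.sum_comm

variable (𝕜 n) [NontriviallyNormedField 𝕜]

noncomputable def detRowContinuousMultilinear :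
    ContinuousMultilinearMap 𝕜 (fun _ : n => n → 𝕜) 𝕜 where
  toMultilinearMap := detRowAlternating.toMultilinearMap
  cont := continuous_id.matrix_det

variable {𝕜 n} [CompleteSpace 𝕜]

theorem hasFDerivAt_det (C : Matrix n n 𝕜) :
    HasFDerivAt det (LinearMap.toContinuousLinearMap
      ((traceLinearMap n 𝕜 𝕜).comp (LinearMap.mulLeft 𝕜 C.adjugate))) C := by
  refine ((detRowContinuousMultilinear 𝕜 n).hasFDerivAt C).congr_fderiv ?_
  refine ContinuousLinearMap.ext fun H => ?_
  exact ((detRowContinuousMultilinear 𝕜 n).linearDeriv_apply C H).trans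
    (sum_det_updateRow_eq_trace_adjugate_mul C H)

end Matrix

open Set in
theorem HasDerivAt.ite_le {g : ℝ → ℝ} {g' a x : ℝ} (hg : HasDerivAt g g' x) (hga : g a = 0)
    (hg' : x = a → g' = 0) :
    HasDerivAt (fun y => if a ≤ y then g y else 0) (if a ≤ x then g' else 0) x := by
  rcases lt_trichotomy x a with hxa | rfl | hax
  · rw [if_neg hxa.not_ge]
    refine (hasDerivAt_const x 0).congr_of_eventuallyEq ?_
    filter_upwards [Iio_mem_nhds hxa] with y hy
    rw [if_neg (not_le.2 hy)]
  · rw [if_pos le_rfl, hg' rfl]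
    have hright : HasDerivWithinAt (fun y => if x ≤ y then g y else 0) 0 (Ici x) x :=
      (hg' rfl ▸ hg).hasDerivWithinAt.congr (fun y hy => if_pos hy) (if_pos le_rfl)
    have hleft : HasDerivWithinAt (fun y => if x ≤ y then g y else 0) 0 (Iic x) x := by
      refine (hasDerivWithinAt_const x _ 0).congr (fun y hy => ?_) (by rw [if_pos le_rfl, hga])
      rcases (mem_Iic.1 hy).lt_or_eq with hy | rfl
      · exact if_neg hy.not_ge
      · rw [if_pos le_rfl, hga]
    simpa [Iic_union_Ici] using hleft.union hright
  · rw [if_pos hax.le]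
    refine hg.congr_of_eventuallyEq ?_
    filter_upwards [Ioi_mem_nhds hax] with y hy
    rw [if_pos hy.le]

noncomputable def volumetricEnergy (κ y : ℝ) : ℝ :=
  (κ / 2) * ((y - 1) / 2 - (1 / 2) * Real.log y)

theorem volumetricEnergy_one (κ : ℝ) : volumetricEnergy κ 1 = 0 := by
  simp [volumetricEnergy]

theorem hasDerivAt_volumetricEnergy (κ : ℝ) {x : ℝ} (hx : x ≠ 0) :
    HasDerivAt (volumetricEnergy κ) ((κ / 4) * (x - 1) / x) x := by
  have h : HasDerivAt (volumetricEnergy κ) ((κ / 2) * (1 / 2 - (1 / 2) * x⁻¹)) x :=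
    ((((hasDerivAt_id x).sub_const 1).div_const 2).sub
      ((Real.hasDerivAt_log hx).const_mul (1 / 2))).const_mul (κ / 2)
  convert h using 1
  field_simp
  ring

/-- The dilative energy `U⁺(C) = H(det C - 1) · U_vol(C)`, with
`U_vol(C) = (κ/2)[(det C - 1)/2 - (1/2) log det C]`, is Fréchet differentiable
at every `C` with `det C > 0` — including matrices with `det C = 1` — with
derivative `H ↦ (κ/4) max(det C - 1, 0) trace(C⁻¹ H)`; equivalently, the
dilative stress satisfies `S⁺(C) = H(det C - 1) S_∘(C)` with
`S_∘(C) = (κ/2)(det C - 1) C⁻¹`. -/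
theorem dilative_energy_fderiv (n : ℕ) (κ : ℝ) (C : Matrix (Fin n) (Fin n) ℝ)
    (hC : 0 < C.det) :
    HasFDerivAt (fun A : Matrix (Fin n) (Fin n) ℝ =>
        if 1 ≤ A.det then (κ / 2) * ((A.det - 1) / 2 - (1 / 2) * Real.log A.det) else 0)
      (LinearMap.toContinuousLinearMap
        (((κ / 4) * max (C.det - 1) 0) •
          ((Matrix.traceLinearMap (Fin n) ℝ ℝ).comp (LinearMap.mulLeft ℝ C⁻¹)))) C ∧
    ∀ H : Matrix (Fin n) (Fin n) ℝ,
      (κ / 4) * max (C.det - 1) 0 * Matrix.trace (C⁻¹ * H) =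
        (1 / 2) * Matrix.trace
          (((if 0 ≤ C.det - 1 then (1 : ℝ) else 0) •
            (((κ / 2) * (C.det - 1)) • C⁻¹)) * H) := by
  have hdet : C.det ≠ 0 := hC.ne'
  have hφ := (hasDerivAt_volumetricEnergy κ hdet).ite_le (volumetricEnergy_one κ)
    (fun h => by simp [h])
  have htrace (H : Matrix (Fin n) (Fin n) ℝ) :
      trace (C.adjugate * H) = C.det * trace (C⁻¹ * H) := by
    rw [inv_def, Ring.inverse_eq_inv', smul_mul, trace_smul, smul_eq_mul,
      mul_inv_cancel_left₀ hdet]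
  refine ⟨(hφ.comp_hasFDerivAt C (hasFDerivAt_det C)).congr_fderiv ?_, fun H => ?_⟩
  · refine ContinuousLinearMap.ext fun H => ?_
    show _ * trace (C.adjugate * H) = (κ / 4) * max (C.det - 1) 0 * trace (C⁻¹ * H)
    rw [htrace]
    split_ifs with h
    · rw [max_eq_left (sub_nonneg.2 h)]
      field_simp
    · rw [max_eq_right (by linarith)]
      ring
  · split_ifs with h
    · rw [one_smul, max_eq_left h, smul_mul, trace_smul, smul_eq_mul]
      ring
    · rw [max_eq_right (not_le.1 h).le]
      simp
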